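/- There exists a rational number T₀ > 0 (depending on r, a, b, α and θ) such that for every rational T ≥ T₀ the following holds: if V is a θ^gtr-stable graded representation with dimension vector α^gtr (i.e. dim V_{i,n} = α_i for all i, n), then V is generated in degree a, i.e. the only subrepresentation M of V with M_{i,a} = V_{i,a} for all i ∈ I is M = V. -/
import Mathlib


noncomputable section

open Module

/-- `θ^lg(m) + θ^mid(m) + θ^sm(m)` for a function `m` on `I × {a,…,b}`,
where `I = {1,…,r} ∪ {∞}` is encoded as `Option (Fin r)` (`none = ∞`). -/
def thetaAux (r : ℕ) (a b : ℤ) (T : ℚ) (θ : Option (Fin r) → ℤ)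
    (m : Option (Fin r) → ℤ → ℤ) : ℚ :=
  (T ^ (r + 1) * ((m none b - m none a : ℤ) : ℚ)
      + ∑ i : Fin r, T ^ ((i : ℕ) + 1) * ((m (some i) b - m (some i) a : ℤ) : ℚ))
  + (∑ i : Option (Fin r), (θ i : ℚ) * ((m i a : ℤ) : ℚ))
  + (-(∑ i : Fin r, T ^ (-(((i : ℕ) : ℤ) + 1)) * ((m (some i) a : ℤ) : ℚ))
      + T ^ (-(r : ℤ) - 1) * ∑ i : Option (Fin r), ∑ n ∈ Finset.Ioo a b, ((m i n : ℤ) : ℚ))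

/-- `θ^gtr(m) = θ^lg(m) + θ^mid(m) + θ^sm(m) − C·m_{∞,a}`. -/
def thetaGtr (r : ℕ) (a b : ℤ) (T : ℚ) (θ : Option (Fin r) → ℤ)
    (α : Option (Fin r) → ℕ) (m : Option (Fin r) → ℤ → ℤ) : ℚ :=
  thetaAux r a b T θ m
    - thetaAux r a b T θ (fun i _ => (α i : ℤ)) * ((m none a : ℤ) : ℚ)

lemma key_le (r : ℕ) (a b : ℤ) (T : ℚ) (hT : 0 ≤ T)
    (θ : Option (Fin r) → ℤ) (α : Option (Fin r) → ℕ) (hα : α none = 1)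
    (m : Option (Fin r) → ℤ → ℤ)
    (ha : ∀ i, m i a = α i)
    (hb : ∀ i, m i b ≤ α i)
    (hIoo : ∀ i, ∀ n ∈ Finset.Ioo a b, m i n ≤ α i) :
    thetaGtr r a b T θ α m ≤ 0 := by
  have hma : ((m none a : ℤ) : ℚ) = 1 := by rw [ha, hα]; norm_num
  unfold thetaGtr thetaAux
  rw [hma, mul_one]
  have e1 : T ^ (r + 1) * ((m none b - m none a : ℤ) : ℚ) ≤ 0 := by
    apply mul_nonpos_of_nonneg_of_nonpos (pow_nonneg hT _)
    have := hb none; have := ha none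
    push_cast; have h1 : ((m none b : ℤ) : ℚ) ≤ ((α none : ℤ) : ℚ) := by exact_mod_cast hb none
    have h2 : ((m none a : ℤ) : ℚ) = ((α none : ℤ) : ℚ) := by exact_mod_cast ha none
    linarith
  have e2 : ∑ i : Fin r, T ^ ((i : ℕ) + 1) * ((m (some i) b - m (some i) a : ℤ) : ℚ) ≤ 0 := by
    apply Finset.sum_nonpos
    intro i _
    apply mul_nonpos_of_nonneg_of_nonpos (pow_nonneg hT _)
    have h1 := hb (some i); have h2 := ha (some i)
    push_cast
    have : ((m (some i) b : ℤ) : ℚ) ≤ ((α (some i) : ℤ) : ℚ) := by exact_mod_cast h1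
    have : ((m (some i) a : ℤ) : ℚ) = ((α (some i) : ℤ) : ℚ) := by exact_mod_cast h2
    push_cast at *
    linarith
  have e3 : ∑ i : Option (Fin r), (θ i : ℚ) * ((m i a : ℤ) : ℚ)
      = ∑ i : Option (Fin r), (θ i : ℚ) * (((fun i (_ : ℤ) => (α i : ℤ)) i a : ℤ) : ℚ) := by
    apply Finset.sum_congr rfl; intro i _; rw [ha]
  have e4 : ∑ i : Fin r, T ^ (-(((i : ℕ) : ℤ) + 1)) * ((m (some i) a : ℤ) : ℚ)
      = ∑ i : Fin r, T ^ (-(((i : ℕ) : ℤ) + 1)) * (((fun i (_ : ℤ) => (α i : ℤ)) (some i) a : ℤ) : ℚ) := by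
    apply Finset.sum_congr rfl; intro i _; rw [ha]
  have e5 : T ^ (-(r : ℤ) - 1) * ∑ i : Option (Fin r), ∑ n ∈ Finset.Ioo a b, ((m i n : ℤ) : ℚ)
      ≤ T ^ (-(r : ℤ) - 1) * ∑ i : Option (Fin r), ∑ n ∈ Finset.Ioo a b, (((fun i (_ : ℤ) => (α i : ℤ)) i n : ℤ) : ℚ) := by
    apply mul_le_mul_of_nonneg_left _ (zpow_nonneg hT _)
    apply Finset.sum_le_sum; intro i _
    apply Finset.sum_le_sum; intro n hn
    exact_mod_cast hIoo i n hn
  have e6 : T ^ (r + 1) * ((((fun i (_ : ℤ) => (α i : ℤ)) none b : ℤ) : ℚ) - (((fun i (_ : ℤ) => (α i : ℤ)) none a : ℤ) : ℚ)) = 0 := by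
    simp
  have e7 : ∑ i : Fin r, T ^ ((i : ℕ) + 1) * ((((fun i (_ : ℤ) => (α i : ℤ)) (some i) b - ((fun i (_ : ℤ) => (α i : ℤ)) (some i) a) : ℤ)) : ℚ) = 0 := by
    simp
  simp only at e3 e4 e5 e6 e7 ⊢
  push_cast at *
  linarith

/-- For `T ≫ 0`, every `θ^gtr`-stable graded representation of dimension
vector `α^gtr` is generated in degree `a`. -/
theorem stmt6 (r : ℕ) (a b : ℤ) (hab : a < b)
    (α : Option (Fin r) → ℕ) (hα : α none = 1)
    (θ : Option (Fin r) → ℤ) :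
    ∃ T₀ : ℚ, 0 < T₀ ∧ ∀ T : ℚ, T₀ ≤ T →
    ∀ (H : Type) (s t : H → Option (Fin r)) (bar : H → H),
      (∀ h, bar (bar h) = h) → (∀ h, bar h ≠ h) →
      (∀ h, s (bar h) = t h) → (∀ h, t (bar h) = s h) →
    ∀ (eps : H → ℤ), (∀ h, eps h = 1 ∨ eps h = -1) → (∀ h, eps (bar h) = - eps h) →
    ∀ (V : Option (Fin r) → ℤ → Type)
      (_ : ∀ i n, AddCommGroup (V i n)),
      ∀ (_ : ∀ i n, Module ℂ (V i n)) (_ : ∀ i n, FiniteDimensional ℂ (V i n))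
      (aM : ∀ h n, V (s h) n →ₗ[ℂ] V (t h) (n + 1))
      (eM : ∀ i n, V i n →ₗ[ℂ] V i (n + 1)),
      -- the dimension vector is α^gtr
      (∀ i, ∀ n ∈ Finset.Icc a b, finrank ℂ (V i n) = α i) →
      -- θ^gtr-stability
      (∀ M : ∀ i n, Submodule ℂ (V i n),
        (∀ h, ∀ n ∈ Finset.Icc a (b - 1), (M (s h) n).map (aM h n) ≤ M (t h) (n + 1)) →
        (∀ i, ∀ n ∈ Finset.Icc a (b - 1), (M i n).map (eM i n) ≤ M i (n + 1)) →
        (∃ i, ∃ n ∈ Finset.Icc a b, M i n ≠ ⊥) →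
        (∃ i, ∃ n ∈ Finset.Icc a b, M i n ≠ ⊤) →
        0 < thetaGtr r a b T θ α (fun i n => (finrank ℂ (M i n) : ℤ))) →
      -- then V is generated in degree a
      ∀ M : ∀ i n, Submodule ℂ (V i n),
        (∀ h, ∀ n ∈ Finset.Icc a (b - 1), (M (s h) n).map (aM h n) ≤ M (t h) (n + 1)) →
        (∀ i, ∀ n ∈ Finset.Icc a (b - 1), (M i n).map (eM i n) ≤ M i (n + 1)) →
        (∀ i, M i a = ⊤) →
        ∀ i, ∀ n ∈ Finset.Icc a b, M i n = ⊤ := by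
  refine ⟨1, one_pos, ?_⟩
  intro T hT Hk s t bar _ _ _ _ eps _ _ V _ _ hfd aM eM hdim hstab M hMa' hMe hMa i n hn
  by_contra hne
  have haIcc : a ∈ Finset.Icc a b := Finset.mem_Icc.2 ⟨le_refl a, le_of_lt hab⟩
  have hbIcc : b ∈ Finset.Icc a b := Finset.mem_Icc.2 ⟨le_of_lt hab, le_refl b⟩
  have hbot : M none a ≠ ⊥ := by
    rw [hMa none]
    intro h
    have h0 : finrank ℂ (⊤ : Submodule ℂ (V none a)) = 0 := by
      rw [h, finrank_bot]
    rw [finrank_top, hdim none a haIcc, hα] at h0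
    exact one_ne_zero h0
  have hpos := hstab M hMa' hMe ⟨none, a, haIcc, hbot⟩ ⟨i, n, hn, hne⟩
  have hle : thetaGtr r a b T θ α (fun i n => (finrank ℂ (M i n) : ℤ)) ≤ 0 := by
    apply key_le r a b T (by linarith) θ α hα
    · intro j
      rw [hMa j, finrank_top, hdim j a haIcc]
    · intro j
      exact_mod_cast (hdim j b hbIcc) ▸ Submodule.finrank_le (M j b)
    · intro j k hk
      have hkIcc : k ∈ Finset.Icc a b := by
        rw [Finset.mem_Ioo] at hk; exact Finset.mem_Icc.2 ⟨le_of_lt hk.1, le_of_lt hk.2⟩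
      exact_mod_cast (hdim j k hkIcc) ▸ Submodule.finrank_le (M j k)
  linarith
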